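/- (Dirichlet form equals Carré du Champ.) For every integer N ≥ 2, every ρ ∈ (0,1) and every function f : Σ_N → [0,∞) which is a probability density with respect to ν_ρ (i.e. ∑_η ν_ρ(η) f(η) = 1), one has −∑_{η∈Σ_N} ν_ρ(η) √(f(η)) · (L_N √f)(η) = (1/2) ∑_{(x,y)∈E_N} ∑_{η∈Σ_N} ν_ρ(η) c_{x,y}(η) (√(f(η^{x,y})) − √(f(η)))². -/

import Mathlib

open Finset

/-- The two-dimensional discrete torus `Λ_N = ℤ²/Nℤ²`. -/
abbrev Torus (N : ℕ) := ZMod N × ZMod N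

/-- Particle configurations `Σ_N = {0,1}^{Λ_N}`. -/
abbrev Config (N : ℕ) := Torus N → Bool

/-- Occupation number as a real number. -/
noncomputable def bval (b : Bool) : ℝ := if b then 1 else 0

/-- The four unit directions `e¹, e², -e¹, -e²`. -/
def dvec (N : ℕ) : Fin 4 → Torus N := ![(1, 0), (0, 1), (-1, 0), (0, -1)]

/-- Reversal of a direction. -/
def rev : Fin 4 → Fin 4 := ![2, 3, 0, 1]

/-- The two coordinate unit vectors `e¹, e²`. -/
def ee (N : ℕ) : Fin 2 → Torus N := ![(1, 0), (0, 1)]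

/-- `η^{x,y}` : exchange the occupation values at `x` and `y`. -/
def swap {N : ℕ} (η : Config N) (x y : Torus N) : Config N :=
  fun z => if z = x then η y else if z = y then η x else η z

/-- Translation of configurations, `(τ_z η)(w) = η(w - z)`. -/
def trc {N : ℕ} (z : Torus N) (η : Config N) : Config N := fun w => η (w - z)

/-- Translation of functions, `(τ_z h)(η) = h(τ_{-z} η)`. -/
def trf {N : ℕ} (z : Torus N) (h : Config N → ℝ) : Config N → ℝ := fun η => h (trc (-z) η)

/-- The local function `g` on the face with lower-left corner `0`. -/
noncomputable def gfun {N : ℕ} (α : ℝ) (η : Config N) : ℝ :=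
  if η (0, 0) = true ∧ η (1, 1) = true ∧ η (1, 0) = false ∧ η (0, 1) = false then α
  else if η (1, 0) = true ∧ η (0, 1) = true ∧ η (0, 0) = false ∧ η (1, 1) = false then α
  else 0

/-- Lower-left corner of the anticlockwise face `f⁺(x, x + dvec d)` traversing the edge
according to its orientation. -/
def fplus {N : ℕ} (x : Torus N) (d : Fin 4) : Torus N :=
  ![x, x - (1, 0), x - (1, 0) - (0, 1), x - (0, 1)] d

/-- Lower-left corner of the anticlockwise face `f⁻(x, x + dvec d)` traversing the reversed
edge according to its orientation. -/
def fminus {N : ℕ} (x : Torus N) (d : Fin 4) : Torus N :=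
  ![x - (0, 1), x, x - (1, 0), x - (1, 0) - (0, 1)] d

/-- The jump rate `c_{x, x + dvec d}(η)`. -/
noncomputable def rate {N : ℕ} (α : ℝ) (η : Config N) (x : Torus N) (d : Fin 4) : ℝ :=
  bval (η x) * (1 - bval (η (x + dvec N d)))
    + bval (η x) * (trf (fplus x d) (gfun α) η - trf (fminus x d) (gfun α) η)

/-- The Bernoulli product measure `ν_ρ`. -/
noncomputable def nu {N : ℕ} [NeZero N] (ρ : ℝ) (η : Config N) : ℝ :=
  ∏ x : Torus N, if η x then ρ else 1 - ρ

/-- The generator `L_N`. -/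
noncomputable def gen {N : ℕ} [NeZero N] (α : ℝ) (F : Config N → ℝ) (η : Config N) : ℝ :=
  ∑ x : Torus N, ∑ d : Fin 4, rate α η x d * (F (swap η x (x + dvec N d)) - F η)

/-- Sum of an edge function over the four directed edges of the anticlockwise oriented face
with lower-left corner `w`. -/
noncomputable def faceCCW {N : ℕ} (F : Torus N → Fin 4 → ℝ) (w : Torus N) : ℝ :=
  F w 0 + F (w + (1, 0)) 1 + F (w + (1, 0) + (0, 1)) 2 + F (w + (0, 1)) 3

/-- Sum of an edge function over the four directed edges of the clockwise oriented face
with lower-left corner `w`. -/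
noncomputable def faceCW {N : ℕ} (F : Torus N → Fin 4 → ℝ) (w : Torus N) : ℝ :=
  F w 1 + F (w + (0, 1)) 0 + F (w + (1, 0) + (0, 1)) 3 + F (w + (1, 0)) 2

/-!
Writing `h = √f` and expanding the square, the identity reduces to
`∑_{x,y} ∑_η ν(η) c_{x,y}(η) h(η^{x,y})² = ∑_{x,y} ∑_η ν(η) c_{x,y}(η) h(η)²`. Since `ν_ρ` is
exchange invariant, this follows from invariance of the total rate,
`∑_{x,y} c_{x,y}(η^{x,y}) = ∑_{x,y} c_{x,y}(η)`. For the exclusion part of the rates this is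
reversal of the edges. The `g`-part regroups into circulations around the elementary faces, and
each of them vanishes: a face configuration one exchange away from a checkerboard is a pair of
adjacent particles, and the two exchanges leading to a checkerboard move a particle in opposite
directions around the face.
-/

section Reversible

variable {S E : Type*} [Fintype S] [Fintype E]

theorem sum_weight_mul_rate_mul_comp_eq (μ : S → ℝ) (σ : E → S → S) (c : E → S → ℝ)
    (hσ : ∀ e, Function.Involutive (σ e)) (hμ : ∀ e η, μ (σ e η) = μ η)
    (hc : ∀ η, ∑ e, c e (σ e η) = ∑ e, c e η) (F : S → ℝ) :
    ∑ e, ∑ η, μ η * c e η * F (σ e η) = ∑ e, ∑ η, μ η * c e η * F η := by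
  have reindex : ∀ e, ∑ η, μ η * c e η * F (σ e η) = ∑ η, μ η * c e (σ e η) * F η := by
    intro e
    rw [← Equiv.sum_comp (hσ e).toPerm]
    simp [hμ, hσ e _]
  simp only [reindex]
  rw [Finset.sum_comm, Finset.sum_comm (γ := E)]
  congr! 1 with η
  simp only [mul_assoc, mul_comm (c _ _), ← Finset.mul_sum, hc]

theorem neg_sum_weight_mul_generator_eq (μ : S → ℝ) (σ : E → S → S) (c : E → S → ℝ)
    (hσ : ∀ e, Function.Involutive (σ e)) (hμ : ∀ e η, μ (σ e η) = μ η)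
    (hc : ∀ η, ∑ e, c e (σ e η) = ∑ e, c e η) (h : S → ℝ) :
    -∑ η, μ η * (h η * ∑ e, c e η * (h (σ e η) - h η))
      = 1 / 2 * ∑ e, ∑ η, μ η * c e η * (h (σ e η) - h η) ^ 2 := by
  have hsq := sum_weight_mul_rate_mul_comp_eq μ σ c hσ hμ hc (h · ^ 2)
  have lhs : -∑ η, μ η * (h η * ∑ e, c e η * (h (σ e η) - h η))
      = ∑ e, ∑ η, μ η * c e η * h η ^ 2 - ∑ e, ∑ η, μ η * c e η * (h (σ e η) * h η) := by
    simp only [Finset.mul_sum, ← Finset.sum_sub_distrib, ← Finset.sum_neg_distrib]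
    rw [Finset.sum_comm]
    congr! 2
    ring
  have rhs : ∑ e, ∑ η, μ η * c e η * (h (σ e η) - h η) ^ 2
      = ∑ e, ∑ η, μ η * c e η * h (σ e η) ^ 2
        - 2 * ∑ e, ∑ η, μ η * c e η * (h (σ e η) * h η)
        + ∑ e, ∑ η, μ η * c e η * h η ^ 2 := by
    simp only [Finset.mul_sum, ← Finset.sum_sub_distrib, ← Finset.sum_add_distrib]
    congr! 2
    ring
  rw [lhs, rhs, hsq]
  ring

end Reversible

section Lattice

variable {N : ℕ}

theorem swap_apply_left (η : Config N) (x y : Torus N) : swap η x y x = η y := if_pos rfl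

theorem swap_apply_right (η : Config N) (x y : Torus N) : swap η x y y = η x := by
  by_cases h : y = x
  · subst h; exact if_pos rfl
  · simp [swap, h]

theorem swap_apply_of_ne (η : Config N) {x y z : Torus N} (hx : z ≠ x) (hy : z ≠ y) :
    swap η x y z = η z := by
  simp [swap, hx, hy]

theorem swap_eq_comp (η : Config N) (x y : Torus N) : swap η x y = η ∘ Equiv.swap x y := by
  funext z
  simp only [swap, Function.comp_apply, Equiv.swap_apply_def]
  split_ifs <;> rfl

theorem swap_involutive (x y : Torus N) : Function.Involutive fun η : Config N => swap η x y := by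
  intro η
  funext z
  simp [swap_eq_comp]

theorem nu_swap [NeZero N] (ρ : ℝ) (η : Config N) (x y : Torus N) :
    nu ρ (swap η x y) = nu ρ η := by
  simp only [nu, swap_eq_comp]
  exact Equiv.prod_comp (Equiv.swap x y) fun z => if η z then ρ else 1 - ρ

theorem dvec_rev (d : Fin 4) : dvec N (rev d) = -dvec N d := by
  fin_cases d <;> simp [dvec, rev]

theorem rev_involutive : Function.Involutive rev := by
  intro d
  fin_cases d <;> rfl

theorem sum_sum_reverse [NeZero N] (F : Torus N → Torus N → ℝ) :
    ∑ x, ∑ d, F (x + dvec N d) x = ∑ x, ∑ d, F x (x + dvec N d) := by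
  rw [Finset.sum_comm, Finset.sum_comm (f := fun x d => F x (x + dvec N d)),
    ← Equiv.sum_comp rev_involutive.toPerm (fun d => ∑ x, F x (x + dvec N d))]
  refine Finset.sum_congr rfl fun d _ => ?_
  rw [← Equiv.sum_comp (Equiv.subRight (dvec N d))]
  simp [dvec_rev, sub_eq_add_neg]

theorem sum_comp_sub [NeZero N] (G : Torus N → Torus N → Fin 4 → ℝ) (a : Torus N) (d : Fin 4) :
    ∑ x, G (x - a) x d = ∑ w, G w (w + a) d := by
  rw [← Equiv.sum_comp (Equiv.addRight a)]
  simp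

theorem sum_sum_fplus [NeZero N] (G : Torus N → Torus N → Fin 4 → ℝ) :
    ∑ x, ∑ d, G (fplus x d) x d = ∑ w, faceCCW (G w) w := by
  rw [Finset.sum_comm]
  simp only [Fin.sum_univ_four, fplus, faceCCW, Finset.sum_add_distrib, Matrix.cons_val_zero,
    Matrix.cons_val_one, Matrix.cons_val_two, Matrix.cons_val_three, Matrix.head_cons,
    Matrix.tail_cons, sub_sub, add_assoc]
  rw [sum_comp_sub, sum_comp_sub, sum_comp_sub]

theorem sum_sum_fminus [NeZero N] (G : Torus N → Torus N → Fin 4 → ℝ) :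
    ∑ x, ∑ d, G (fminus x d) x d = ∑ w, faceCW (G w) w := by
  rw [Finset.sum_comm]
  simp only [Fin.sum_univ_four, fminus, faceCW, Finset.sum_add_distrib, Matrix.cons_val_zero,
    Matrix.cons_val_one, Matrix.cons_val_two, Matrix.cons_val_three, Matrix.head_cons,
    Matrix.tail_cons, sub_sub, add_assoc]
  rw [sum_comp_sub, sum_comp_sub, sum_comp_sub]
  ring

end Lattice

section Faces

variable {N : ℕ}

/-- `g` as a function of the corner values of a face, listed anticlockwise from the lower-left
corner. -/
noncomputable def checkerboard (α : ℝ) (a b c d : Bool) : ℝ :=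
  if a = true ∧ c = true ∧ b = false ∧ d = false then α
  else if b = true ∧ d = true ∧ a = false ∧ c = false then α
  else 0

theorem trf_gfun (α : ℝ) (w : Torus N) (η : Config N) :
    trf w (gfun α) η
      = checkerboard α (η w) (η (w + (1, 0))) (η (w + (1, 0) + (0, 1))) (η (w + (0, 1))) := by
  have h00 : ((0, 0) : Torus N) - -w = w := by ext <;> simp
  have h10 : ((1, 0) : Torus N) - -w = w + (1, 0) := by ext <;> simp [add_comm]
  have h11 : ((1, 1) : Torus N) - -w = w + (1, 0) + (0, 1) := by ext <;> simp [add_comm]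
  have h01 : ((0, 1) : Torus N) - -w = w + (0, 1) := by ext <;> simp [add_comm]
  simp only [trf, gfun, checkerboard, trc, h00, h10, h11, h01]

theorem checkerboard_circulation (α : ℝ) (a b c d : Bool) :
    (bval b - bval a) * checkerboard α b a c d + (bval c - bval b) * checkerboard α a c b d
      + (bval d - bval c) * checkerboard α a b d c
      + (bval a - bval d) * checkerboard α d b c a = 0 := by
  cases a <;> cases b <;> cases c <;> cases d <;> simp [checkerboard, bval]

theorem faceCCW_eq_faceCW_of_swap [NeZero N] (hN : 2 ≤ N) (α : ℝ) (ζ : Config N)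
    (w : Torus N) :
    faceCCW (fun x d => bval (ζ (x + dvec N d)) * trf w (gfun α) (swap ζ x (x + dvec N d))) w
      = faceCW (fun x d => bval (ζ (x + dvec N d)) * trf w (gfun α) (swap ζ x (x + dvec N d)))
          w := by
  have : Fact (1 < N) := ⟨hN⟩
  have h01 : w ≠ w + (1, 0) := by simp [Prod.ext_iff]
  have h02 : w ≠ w + (1, 0) + (0, 1) := by simp [Prod.ext_iff]
  have h03 : w ≠ w + (0, 1) := by simp [Prod.ext_iff]
  have h12 : w + (1, 0) ≠ w + (1, 0) + (0, 1) := by simp [Prod.ext_iff]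
  have h13 : w + (1, 0) ≠ w + (0, 1) := by simp [Prod.ext_iff]
  have h23 : w + (1, 0) + (0, 1) ≠ w + (0, 1) := by simp [Prod.ext_iff]
  have e20 : w + (1, 0) + (0, 1) + (-1, 0) = w + (0, 1) := by ext <;> simp
  have e30 : w + (0, 1) + (0, -1) = w := by ext <;> simp
  have e31 : w + (0, 1) + (1, 0) = w + (1, 0) + (0, 1) := by ext <;> simp
  have e21 : w + (1, 0) + (0, 1) + (0, -1) = w + (1, 0) := by ext <;> simp
  have e10 : w + (1, 0) + (-1, 0) = w := by ext <;> simp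
  simp only [faceCCW, faceCW, dvec, Matrix.cons_val_zero, Matrix.cons_val_one,
    Matrix.cons_val_two, Matrix.cons_val_three, Matrix.head_cons, Matrix.tail_cons,
    e20, e30, e31, e21, e10, trf_gfun, swap_apply_left, swap_apply_right]
  simp only [swap_apply_of_ne, h01, h02, h03, h12, h13, h23, h01.symm, h02.symm, h03.symm,
    h12.symm, h13.symm, h23.symm, ne_eq, not_false_eq_true]
  linear_combination checkerboard_circulation α (ζ w) (ζ (w + (1, 0))) (ζ (w + (1, 0) + (0, 1)))
    (ζ (w + (0, 1)))

end Faces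

section Rates

variable {N : ℕ} [NeZero N]

theorem sum_sum_fplus_sub_fminus_eq_zero (G : Torus N → Torus N → Fin 4 → ℝ)
    (hG : ∀ w, faceCCW (G w) w = faceCW (G w) w) :
    ∑ x, ∑ d, (G (fplus x d) x d - G (fminus x d) x d) = 0 := by
  simp only [Finset.sum_sub_distrib, sum_sum_fplus, sum_sum_fminus, hG, sub_self]

theorem sum_rate_swap (hN : 2 ≤ N) (α : ℝ) (ζ : Config N) :
    ∑ x, ∑ d, rate α (swap ζ x (x + dvec N d)) x d = ∑ x, ∑ d, rate α ζ x d := by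
  have exclusion := sum_sum_reverse fun u v => bval (ζ u) * (1 - bval (ζ v))
  have swapped := sum_sum_fplus_sub_fminus_eq_zero
    (fun w x d => bval (ζ (x + dvec N d)) * trf w (gfun α) (swap ζ x (x + dvec N d)))
    (faceCCW_eq_faceCW_of_swap hN α ζ)
  have unswapped := sum_sum_fplus_sub_fminus_eq_zero
    (fun w x _ => bval (ζ x) * trf w (gfun α) ζ) fun w => by simp only [faceCCW, faceCW]; ring
  simp only [← mul_sub] at swapped unswapped
  simp only [rate, swap_apply_left, swap_apply_right, Finset.sum_add_distrib, swapped,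
    unswapped, exclusion]

end Rates

theorem stmt_16_general (N : ℕ) [NeZero N] (hN : 2 ≤ N) (α : ℝ)
    (ρ : ℝ) (f : Config N → ℝ) :
    -(∑ η : Config N, nu ρ η * (Real.sqrt (f η)
        * gen α (fun ζ => Real.sqrt (f ζ)) η))
      = (1 / 2) * ∑ x : Torus N, ∑ d : Fin 4, ∑ η : Config N,
          nu ρ η * rate α η x d
            * (Real.sqrt (f (swap η x (x + dvec N d))) - Real.sqrt (f η)) ^ 2 := by
  have key := neg_sum_weight_mul_generator_eq (nu ρ)
    (fun (e : Torus N × Fin 4) η => swap η e.1 (e.1 + dvec N e.2)) (fun e η => rate α η e.1 e.2)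
    (fun _ => swap_involutive _ _) (fun _ _ => nu_swap _ _ _ _)
    (fun η => by simpa only [Fintype.sum_prod_type] using sum_rate_swap hN α η)
    fun η => Real.sqrt (f η)
  simpa only [gen, Fintype.sum_prod_type] using key

/-- the Dirichlet form equals the Carré du Champ:
`-⟨L_N √f, √f⟩_{ν_ρ} = 𝔇_N(√f, ν_ρ)`. -/
theorem stmt_16 (N : ℕ) [NeZero N] (hN : 2 ≤ N) (α : ℝ) (hα : |α| < 1)
    (ρ : ℝ) (hρ : ρ ∈ Set.Ioo (0 : ℝ) 1) (f : Config N → ℝ)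
    (hf0 : ∀ η : Config N, 0 ≤ f η) (hf1 : ∑ η : Config N, nu ρ η * f η = 1) :
    -(∑ η : Config N, nu ρ η * (Real.sqrt (f η)
        * gen α (fun ζ => Real.sqrt (f ζ)) η))
      = (1 / 2) * ∑ x : Torus N, ∑ d : Fin 4, ∑ η : Config N,
          nu ρ η * rate α η x d
            * (Real.sqrt (f (swap η x (x + dvec N d))) - Real.sqrt (f η)) ^ 2 :=
  stmt_16_general N hN α ρ f
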